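/- arXiv:1110.1842 — 10 statements merged into one kernel-verified Lean document; each statement's English description precedes it below -/
import Mathlib

section
/- Let Π be an anonymous system with failure pattern Correct, and let a_sigma be a history satisfying all four AΣ properties (Validity, Monotonicity, Liveness, Safety). Define h_labels_p^τ := {x : ∃τ' ≤ τ, ∃y, (x,y) ∈ a_sigma_p^{τ'}} and h_quora_p^τ := {(x, ⊥^y) : (x,y) ∈ a_sigma_p^τ}. Then the pair (h_quora, h_labels) satisfies all four HΣ properties (Validity, Monotonicity, Liveness, Safety). (Theorem 2: the class HΣ can be obtained from the class AΣ in an anonymous asynchronous system without communication.) -/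
/-!
In an anonymous system the identifier multiset `I(Q)` of a set `Q` is `⊥^|Q|`, so it records
exactly the cardinality of `Q`. Hence an HΣ quorum `(x, ⊥^y)` carries the same information as
the AΣ pair `(x, y)`, and since a label enters `h_labels_p` as soon as `p` outputs it, `S(x)`
coincides with `S_A(x)`. Each HΣ property is then the corresponding AΣ property, read through
`y ↦ ⊥^y`, which is injective and monotone.
-/

namespace AnonymousSigma

open Multiset

variable {Proc L : Type*} (a : Proc → ℕ → Finset (L × ℕ))

def support (x : L) : Set Proc := {p | ∃ τ y, (x, y) ∈ a p τ}

def labels (p : Proc) (τ : ℕ) : Set L := {x | ∃ τ' ≤ τ, ∃ y, (x, y) ∈ a p τ'}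

def quora (p : Proc) (τ : ℕ) : Set (L × Multiset Unit) :=
  {q | ∃ x y, (x, y) ∈ a p τ ∧ q = (x, replicate y ())}

variable {a}

theorem mk_mem_quora {p : Proc} {τ : ℕ} {x : L} {m : Multiset Unit} :
    (x, m) ∈ quora a p τ ↔ ∃ y, (x, y) ∈ a p τ ∧ m = replicate y () := by
  simp [quora]

theorem labels_mono (p : Proc) : Monotone (labels a p) :=
  fun _ _ hττ' _ ⟨τ₀, hτ₀, y, h⟩ => ⟨τ₀, hτ₀.trans hττ', y, h⟩

theorem setOf_exists_mem_labels (x : L) : {p | ∃ τ, x ∈ labels a p τ} = support a x := by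
  ext p
  exact ⟨fun ⟨_, τ, _, y, h⟩ => ⟨τ, y, h⟩, fun ⟨τ, y, h⟩ => ⟨τ, τ, le_rfl, y, h⟩⟩

theorem quora_validity
    (hV : ∀ p τ x y y', (x, y) ∈ a p τ → (x, y') ∈ a p τ → y = y')
    (p : Proc) (τ : ℕ) (x : L) (m m' : Multiset Unit)
    (hm : (x, m) ∈ quora a p τ) (hm' : (x, m') ∈ quora a p τ) : m = m' := by
  obtain ⟨y, hy, rfl⟩ := mk_mem_quora.1 hm
  obtain ⟨y', hy', rfl⟩ := mk_mem_quora.1 hm'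
  rw [hV p τ x y y' hy hy']

theorem quora_monotonicity
    (hM : ∀ p τ x y, (x, y) ∈ a p τ → ∀ τ', τ ≤ τ' → ∃ y' ≤ y, (x, y') ∈ a p τ')
    {p : Proc} {τ τ' : ℕ} (hττ' : τ ≤ τ') (x : L) (m : Multiset Unit)
    (hm : (x, m) ∈ quora a p τ) : ∃ m' ≤ m, (x, m') ∈ quora a p τ' := by
  obtain ⟨y, hy, rfl⟩ := mk_mem_quora.1 hm
  obtain ⟨y', hy'y, hy'⟩ := hM p τ x y hy τ' hττ'
  exact ⟨replicate y' (), (replicate_le_replicate ()).2 hy'y, mk_mem_quora.2 ⟨y', hy', rfl⟩⟩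

theorem quora_liveness {Correct : Set Proc}
    (hL : ∀ p ∈ Correct, ∃ τ, ∀ τ', τ ≤ τ' →
      ∃ x y, (x, y) ∈ a p τ' ∧ y ≤ (support a x ∩ Correct).ncard) :
    ∀ p ∈ Correct, ∃ τ, ∀ τ', τ ≤ τ' → ∃ x m, (x, m) ∈ quora a p τ' ∧
      m ≤ replicate (support a x ∩ Correct).ncard () := by
  intro p hp
  obtain ⟨τ, hτ⟩ := hL p hp
  refine ⟨τ, fun τ' hττ' => ?_⟩
  obtain ⟨x, y, hxy, hy⟩ := hτ τ' hττ'
  exact ⟨x, replicate y (), mk_mem_quora.2 ⟨y, hxy, rfl⟩, (replicate_le_replicate ()).2 hy⟩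

theorem quora_safety
    (hS : ∀ p₁ p₂ τ₁ τ₂ x₁ y₁ x₂ y₂, (x₁, y₁) ∈ a p₁ τ₁ → (x₂, y₂) ∈ a p₂ τ₂ →
      ∀ T₁ T₂ : Set Proc, T₁ ⊆ support a x₁ → T₂ ⊆ support a x₂ →
      T₁.ncard = y₁ → T₂.ncard = y₂ → (T₁ ∩ T₂).Nonempty)
    (p₁ p₂ : Proc) (τ₁ τ₂ : ℕ) (x₁ : L) (m₁ : Multiset Unit) (x₂ : L) (m₂ : Multiset Unit)
    (hm₁ : (x₁, m₁) ∈ quora a p₁ τ₁) (hm₂ : (x₂, m₂) ∈ quora a p₂ τ₂)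
    (Q₁ Q₂ : Set Proc) (hQ₁ : Q₁ ⊆ support a x₁) (hQ₂ : Q₂ ⊆ support a x₂)
    (hc₁ : replicate Q₁.ncard () = m₁) (hc₂ : replicate Q₂.ncard () = m₂) :
    (Q₁ ∩ Q₂).Nonempty := by
  obtain ⟨y₁, hy₁, rfl⟩ := mk_mem_quora.1 hm₁
  obtain ⟨y₂, hy₂, rfl⟩ := mk_mem_quora.1 hm₂
  exact hS p₁ p₂ τ₁ τ₂ x₁ y₁ x₂ y₂ hy₁ hy₂ Q₁ Q₂ hQ₁ hQ₂
    (replicate_left_injective () hc₁) (replicate_left_injective () hc₂)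

end AnonymousSigma

open AnonymousSigma in
theorem astohs_all_general
    {Proc : Type*}
    {L : Type*}
    (Correct : Set Proc)
    (a_sigma : Proc → ℕ → Finset (L × ℕ))
    -- S_A(x) = set of processes that ever output a pair with label x
    (SA : L → Set Proc)
    (hSA : ∀ x, SA x = {p | ∃ τ y, (x, y) ∈ a_sigma p τ})
    -- AΣ Validity
    (aValidity : ∀ p τ x y y',
      (x, y) ∈ a_sigma p τ → (x, y') ∈ a_sigma p τ → y = y')
    -- AΣ Monotonicity
    (aMonotonicity : ∀ p τ x y, (x, y) ∈ a_sigma p τ →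
      ∀ τ', τ ≤ τ' → ∃ y' ≤ y, (x, y') ∈ a_sigma p τ')
    -- AΣ Liveness
    (aLiveness : ∀ p ∈ Correct, ∃ τ, ∀ τ', τ ≤ τ' →
      ∃ x y, (x, y) ∈ a_sigma p τ' ∧ y ≤ (SA x ∩ Correct).ncard)
    -- AΣ Safety
    (aSafety : ∀ p₁ p₂ τ₁ τ₂ x₁ y₁ x₂ y₂,
      (x₁, y₁) ∈ a_sigma p₁ τ₁ → (x₂, y₂) ∈ a_sigma p₂ τ₂ →
      ∀ T₁ T₂ : Set Proc, T₁ ⊆ SA x₁ → T₂ ⊆ SA x₂ →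
      T₁.ncard = y₁ → T₂.ncard = y₂ → (T₁ ∩ T₂).Nonempty)
    -- the derived HΣ history
    (h_labels : Proc → ℕ → Set L)
    (hlab : ∀ p τ, h_labels p τ = {x | ∃ τ' ≤ τ, ∃ y, (x, y) ∈ a_sigma p τ'})
    (h_quora : Proc → ℕ → Set (L × Multiset Unit))
    (hquo : ∀ p τ, h_quora p τ =
      {q | ∃ x y, (x, y) ∈ a_sigma p τ ∧ q = (x, Multiset.replicate y ())})
    -- S(x) = set of processes that ever have label x
    (S : L → Set Proc)
    (hS : ∀ x, S x = {p | ∃ τ, x ∈ h_labels p τ}) :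
    -- HΣ Validity
    (∀ p τ x m m', (x, m) ∈ h_quora p τ → (x, m') ∈ h_quora p τ → m = m') ∧
    -- HΣ Monotonicity
    (∀ p τ τ', τ ≤ τ' → h_labels p τ ⊆ h_labels p τ' ∧
      ∀ x m, (x, m) ∈ h_quora p τ → ∃ m' ≤ m, (x, m') ∈ h_quora p τ') ∧
    -- HΣ Liveness  (here I(S(x) ∩ Correct) = ⊥^{|S(x) ∩ Correct|})
    (∀ p ∈ Correct, ∃ τ, ∀ τ', τ ≤ τ' → ∃ x m, (x, m) ∈ h_quora p τ' ∧
      m ≤ Multiset.replicate ((S x ∩ Correct).ncard) ()) ∧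
    -- HΣ Safety  (here I(Q) = ⊥^{|Q|})
    (∀ p₁ p₂ τ₁ τ₂ x₁ m₁ x₂ m₂,
      (x₁, m₁) ∈ h_quora p₁ τ₁ → (x₂, m₂) ∈ h_quora p₂ τ₂ →
      ∀ Q₁ Q₂ : Set Proc, Q₁ ⊆ S x₁ → Q₂ ⊆ S x₂ →
      Multiset.replicate Q₁.ncard () = m₁ → Multiset.replicate Q₂.ncard () = m₂ →
      (Q₁ ∩ Q₂).Nonempty) := by
  obtain rfl : SA = support a_sigma := funext hSA
  obtain rfl : h_labels = labels a_sigma := funext₂ hlab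
  obtain rfl : h_quora = quora a_sigma := funext₂ hquo
  obtain rfl : S = support a_sigma := funext fun x => (hS x).trans (setOf_exists_mem_labels x)
  exact ⟨quora_validity aValidity,
    fun _ _ _ hττ' => ⟨labels_mono _ hττ', quora_monotonicity aMonotonicity hττ'⟩,
    quora_liveness aLiveness, quora_safety aSafety⟩

/-- In an anonymous system (identifiers all equal `()`, the unique
element of `Unit`, so that `I(S) = ⊥^{|S|} = Multiset.replicate S.ncard ()`),
if `a_sigma` satisfies the four AΣ properties then the derived pair
`(h_quora, h_labels)` satisfies the four HΣ properties. -/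
theorem astohs_all
    {Proc : Type*} [Fintype Proc] [Nonempty Proc]
    {L : Type*}
    (Correct : Set Proc) (hC : Correct.Nonempty)
    (a_sigma : Proc → ℕ → Finset (L × ℕ))
    -- S_A(x) = set of processes that ever output a pair with label x
    (SA : L → Set Proc)
    (hSA : ∀ x, SA x = {p | ∃ τ y, (x, y) ∈ a_sigma p τ})
    -- AΣ Validity
    (aValidity : ∀ p τ x y y',
      (x, y) ∈ a_sigma p τ → (x, y') ∈ a_sigma p τ → y = y')
    -- AΣ Monotonicity
    (aMonotonicity : ∀ p τ x y, (x, y) ∈ a_sigma p τ →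
      ∀ τ', τ ≤ τ' → ∃ y' ≤ y, (x, y') ∈ a_sigma p τ')
    -- AΣ Liveness
    (aLiveness : ∀ p ∈ Correct, ∃ τ, ∀ τ', τ ≤ τ' →
      ∃ x y, (x, y) ∈ a_sigma p τ' ∧ y ≤ (SA x ∩ Correct).ncard)
    -- AΣ Safety
    (aSafety : ∀ p₁ p₂ τ₁ τ₂ x₁ y₁ x₂ y₂,
      (x₁, y₁) ∈ a_sigma p₁ τ₁ → (x₂, y₂) ∈ a_sigma p₂ τ₂ →
      ∀ T₁ T₂ : Set Proc, T₁ ⊆ SA x₁ → T₂ ⊆ SA x₂ →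
      T₁.ncard = y₁ → T₂.ncard = y₂ → (T₁ ∩ T₂).Nonempty)
    -- the derived HΣ history
    (h_labels : Proc → ℕ → Set L)
    (hlab : ∀ p τ, h_labels p τ = {x | ∃ τ' ≤ τ, ∃ y, (x, y) ∈ a_sigma p τ'})
    (h_quora : Proc → ℕ → Set (L × Multiset Unit))
    (hquo : ∀ p τ, h_quora p τ =
      {q | ∃ x y, (x, y) ∈ a_sigma p τ ∧ q = (x, Multiset.replicate y ())})
    -- S(x) = set of processes that ever have label x
    (S : L → Set Proc)
    (hS : ∀ x, S x = {p | ∃ τ, x ∈ h_labels p τ}) :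
    -- HΣ Validity
    (∀ p τ x m m', (x, m) ∈ h_quora p τ → (x, m') ∈ h_quora p τ → m = m') ∧
    -- HΣ Monotonicity
    (∀ p τ τ', τ ≤ τ' → h_labels p τ ⊆ h_labels p τ' ∧
      ∀ x m, (x, m) ∈ h_quora p τ → ∃ m' ≤ m, (x, m') ∈ h_quora p τ') ∧
    -- HΣ Liveness  (here I(S(x) ∩ Correct) = ⊥^{|S(x) ∩ Correct|})
    (∀ p ∈ Correct, ∃ τ, ∀ τ', τ ≤ τ' → ∃ x m, (x, m) ∈ h_quora p τ' ∧
      m ≤ Multiset.replicate ((S x ∩ Correct).ncard) ()) ∧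
    -- HΣ Safety  (here I(Q) = ⊥^{|Q|})
    (∀ p₁ p₂ τ₁ τ₂ x₁ m₁ x₂ m₂,
      (x₁, m₁) ∈ h_quora p₁ τ₁ → (x₂, m₂) ∈ h_quora p₂ τ₂ →
      ∀ Q₁ Q₂ : Set Proc, Q₁ ⊆ S x₁ → Q₂ ⊆ S x₂ →
      Multiset.replicate Q₁.ncard () = m₁ → Multiset.replicate Q₂.ncard () = m₂ →
      (Q₁ ∩ Q₂).Nonempty) :=
  astohs_all_general Correct a_sigma SA hSA aValidity aMonotonicity aLiveness aSafety h_labels hlab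
    h_quora hquo S hS
end

section
/- Let Π be an anonymous system with failure pattern Correct, and let a_sigma be a history satisfying the AΣ Safety property. Define h_labels_p^τ := {x : ∃τ' ≤ τ, ∃y, (x,y) ∈ a_sigma_p^{τ'}} and h_quora_p^τ := {(x, ⊥^y) : (x,y) ∈ a_sigma_p^τ}. Then (h_quora, h_labels) satisfies the HΣ Safety property: for all p₁,p₂ ∈ Π, τ₁,τ₂ ∈ ℕ, (x₁,m₁) ∈ h_quora_{p₁}^{τ₁}, (x₂,m₂) ∈ h_quora_{p₂}^{τ₂} and all Q₁ ⊆ S(x₁), Q₂ ⊆ S(x₂) with I(Q₁) = m₁ and I(Q₂) = m₂, Q₁ ∩ Q₂ ≠ ∅, where S(x) := {p ∈ Π : ∃τ, x ∈ h_labels_p^τ}. -/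
/-! Quorum multisets in an anonymous system carry only their size, and a label is ever
output cumulatively iff it is ever output by `a_sigma`; so an HΣ quorum pair is literally
an AΣ pair of sets, and AΣ Safety applies verbatim. -/

theorem exists_exists_le_iff_exists {P : ℕ → Prop} : (∃ n, ∃ m ≤ n, P m) ↔ ∃ m, P m :=
  ⟨fun ⟨_, m, _, h⟩ => ⟨m, h⟩, fun ⟨m, h⟩ => ⟨m, m, le_rfl, h⟩⟩

theorem astohs_safety_general
    {Proc : Type*}
    {L : Type*}
    (a_sigma : Proc → ℕ → Finset (L × ℕ))
    (SA : L → Set Proc)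
    (hSA : ∀ x, SA x = {p | ∃ τ y, (x, y) ∈ a_sigma p τ})
    -- AΣ Safety
    (aSafety : ∀ p₁ p₂ τ₁ τ₂ x₁ y₁ x₂ y₂,
      (x₁, y₁) ∈ a_sigma p₁ τ₁ → (x₂, y₂) ∈ a_sigma p₂ τ₂ →
      ∀ T₁ T₂ : Set Proc, T₁ ⊆ SA x₁ → T₂ ⊆ SA x₂ →
      T₁.ncard = y₁ → T₂.ncard = y₂ → (T₁ ∩ T₂).Nonempty)
    (h_labels : Proc → ℕ → Set L)
    (hlab : ∀ p τ, h_labels p τ = {x | ∃ τ' ≤ τ, ∃ y, (x, y) ∈ a_sigma p τ'})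
    (h_quora : Proc → ℕ → Set (L × Multiset Unit))
    (hquo : ∀ p τ, h_quora p τ =
      {q | ∃ x y, (x, y) ∈ a_sigma p τ ∧ q = (x, Multiset.replicate y ())})
    (S : L → Set Proc)
    (hS : ∀ x, S x = {p | ∃ τ, x ∈ h_labels p τ}) :
    -- HΣ Safety
    ∀ p₁ p₂ τ₁ τ₂ x₁ m₁ x₂ m₂,
      (x₁, m₁) ∈ h_quora p₁ τ₁ → (x₂, m₂) ∈ h_quora p₂ τ₂ →
      ∀ Q₁ Q₂ : Set Proc, Q₁ ⊆ S x₁ → Q₂ ⊆ S x₂ →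
      Multiset.replicate Q₁.ncard () = m₁ → Multiset.replicate Q₂.ncard () = m₂ →
      (Q₁ ∩ Q₂).Nonempty := by
  intro p₁ p₂ τ₁ τ₂ x₁ m₁ x₂ m₂ h₁ h₂ Q₁ Q₂ hQ₁ hQ₂ hm₁ hm₂
  simp only [hquo, Set.mem_ofPred_eq, Prod.mk.injEq] at h₁ h₂
  obtain ⟨_, y₁, ha₁, rfl, rfl⟩ := h₁
  obtain ⟨_, y₂, ha₂, rfl, rfl⟩ := h₂
  have hS_eq_SA : ∀ x, S x = SA x := fun x => by
    ext p
    simp only [hS, hSA, hlab, Set.mem_ofPred_eq, exists_exists_le_iff_exists]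
  exact aSafety p₁ p₂ τ₁ τ₂ x₁ y₁ x₂ y₂ ha₁ ha₂ Q₁ Q₂ (hS_eq_SA x₁ ▸ hQ₁) (hS_eq_SA x₂ ▸ hQ₂)
    (Multiset.replicate_left_injective () hm₁) (Multiset.replicate_left_injective () hm₂)

/-- In an anonymous system, if `a_sigma` satisfies the AΣ Safety
property, then the derived pair `(h_quora, h_labels)` satisfies the HΣ Safety
property (here `I(Q) = ⊥^{|Q|} = Multiset.replicate Q.ncard ()`). -/
theorem astohs_safety
    {Proc : Type*} [Fintype Proc] [Nonempty Proc]
    {L : Type*}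
    (Correct : Set Proc) (hC : Correct.Nonempty)
    (a_sigma : Proc → ℕ → Finset (L × ℕ))
    (SA : L → Set Proc)
    (hSA : ∀ x, SA x = {p | ∃ τ y, (x, y) ∈ a_sigma p τ})
    -- AΣ Safety
    (aSafety : ∀ p₁ p₂ τ₁ τ₂ x₁ y₁ x₂ y₂,
      (x₁, y₁) ∈ a_sigma p₁ τ₁ → (x₂, y₂) ∈ a_sigma p₂ τ₂ →
      ∀ T₁ T₂ : Set Proc, T₁ ⊆ SA x₁ → T₂ ⊆ SA x₂ →
      T₁.ncard = y₁ → T₂.ncard = y₂ → (T₁ ∩ T₂).Nonempty)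
    (h_labels : Proc → ℕ → Set L)
    (hlab : ∀ p τ, h_labels p τ = {x | ∃ τ' ≤ τ, ∃ y, (x, y) ∈ a_sigma p τ'})
    (h_quora : Proc → ℕ → Set (L × Multiset Unit))
    (hquo : ∀ p τ, h_quora p τ =
      {q | ∃ x y, (x, y) ∈ a_sigma p τ ∧ q = (x, Multiset.replicate y ())})
    (S : L → Set Proc)
    (hS : ∀ x, S x = {p | ∃ τ, x ∈ h_labels p τ}) :
    -- HΣ Safety
    ∀ p₁ p₂ τ₁ τ₂ x₁ m₁ x₂ m₂,
      (x₁, m₁) ∈ h_quora p₁ τ₁ → (x₂, m₂) ∈ h_quora p₂ τ₂ →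
      ∀ Q₁ Q₂ : Set Proc, Q₁ ⊆ S x₁ → Q₂ ⊆ S x₂ →
      Multiset.replicate Q₁.ncard () = m₁ → Multiset.replicate Q₂.ncard () = m₂ →
      (Q₁ ∩ Q₂).Nonempty :=
  astohs_safety_general a_sigma SA hSA aSafety h_labels hlab h_quora hquo S hS
end

section
/- Let Π be an anonymous system with failure pattern Correct, and let a_sigma be a history satisfying the AΣ Liveness property. Define h_labels_p^τ := {x : ∃τ' ≤ τ, ∃y, (x,y) ∈ a_sigma_p^{τ'}} and h_quora_p^τ := {(x, ⊥^y) : (x,y) ∈ a_sigma_p^τ}. Then (h_quora, h_labels) satisfies the HΣ Liveness property: for every p ∈ Correct there is τ such that for every τ' ≥ τ some (x,m) ∈ h_quora_p^{τ'} has m ⊆ I(S(x) ∩ Correct), where S(x) := {p ∈ Π : ∃τ, x ∈ h_labels_p^τ}. -/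
/-! The cumulative labels `h_labels` reach exactly the processes that ever output a label in
`a_sigma`, so `S = SA`; hence the AΣ witness `(x, y)` with `y ≤ |SA x ∩ Correct|` yields the
HΣ witness `(x, ⊥^y)`, since `⊥^y ≤ ⊥^k ↔ y ≤ k`. -/

theorem exists_exists_le_iff {α : Type*} [Preorder α] {P : α → Prop} :
    (∃ a, ∃ b ≤ a, P b) ↔ ∃ a, P a :=
  ⟨fun ⟨_, b, _, h⟩ => ⟨b, h⟩, fun ⟨a, h⟩ => ⟨a, a, le_rfl, h⟩⟩

theorem astohs_liveness_general
    {Proc : Type*}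
    {L : Type*}
    (Correct : Set Proc)
    (a_sigma : Proc → ℕ → Finset (L × ℕ))
    (SA : L → Set Proc)
    (hSA : ∀ x, SA x = {p | ∃ τ y, (x, y) ∈ a_sigma p τ})
    -- AΣ Liveness
    (aLiveness : ∀ p ∈ Correct, ∃ τ, ∀ τ', τ ≤ τ' →
      ∃ x y, (x, y) ∈ a_sigma p τ' ∧ y ≤ (SA x ∩ Correct).ncard)
    (h_labels : Proc → ℕ → Set L)
    (hlab : ∀ p τ, h_labels p τ = {x | ∃ τ' ≤ τ, ∃ y, (x, y) ∈ a_sigma p τ'})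
    (h_quora : Proc → ℕ → Set (L × Multiset Unit))
    (hquo : ∀ p τ, h_quora p τ =
      {q | ∃ x y, (x, y) ∈ a_sigma p τ ∧ q = (x, Multiset.replicate y ())})
    (S : L → Set Proc)
    (hS : ∀ x, S x = {p | ∃ τ, x ∈ h_labels p τ}) :
    -- HΣ Liveness
    ∀ p ∈ Correct, ∃ τ, ∀ τ', τ ≤ τ' → ∃ x m, (x, m) ∈ h_quora p τ' ∧
      m ≤ Multiset.replicate ((S x ∩ Correct).ncard) () := by
  have hS_eq_SA : S = SA := by
    funext x
    ext p
    simp only [hS, hSA, hlab, Set.mem_ofPred_eq, exists_exists_le_iff]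
  intro p hp
  obtain ⟨τ, hτ⟩ := aLiveness p hp
  refine ⟨τ, fun τ' hτ' => ?_⟩
  obtain ⟨x, y, hxy, hy⟩ := hτ τ' hτ'
  refine ⟨x, Multiset.replicate y (), ?_, ?_⟩
  · rw [hquo]
    exact ⟨x, y, hxy, rfl⟩
  · rw [hS_eq_SA]
    exact (Multiset.replicate_le_replicate ()).mpr hy

/-- In an anonymous system, if `a_sigma` satisfies the AΣ Liveness
property, then the derived pair `(h_quora, h_labels)` satisfies the HΣ Liveness
property (here `I(S(x) ∩ Correct) = ⊥^{|S(x) ∩ Correct|}`). -/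
theorem astohs_liveness
    {Proc : Type*} [Fintype Proc] [Nonempty Proc]
    {L : Type*}
    (Correct : Set Proc) (hC : Correct.Nonempty)
    (a_sigma : Proc → ℕ → Finset (L × ℕ))
    (SA : L → Set Proc)
    (hSA : ∀ x, SA x = {p | ∃ τ y, (x, y) ∈ a_sigma p τ})
    -- AΣ Liveness
    (aLiveness : ∀ p ∈ Correct, ∃ τ, ∀ τ', τ ≤ τ' →
      ∃ x y, (x, y) ∈ a_sigma p τ' ∧ y ≤ (SA x ∩ Correct).ncard)
    (h_labels : Proc → ℕ → Set L)
    (hlab : ∀ p τ, h_labels p τ = {x | ∃ τ' ≤ τ, ∃ y, (x, y) ∈ a_sigma p τ'})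
    (h_quora : Proc → ℕ → Set (L × Multiset Unit))
    (hquo : ∀ p τ, h_quora p τ =
      {q | ∃ x y, (x, y) ∈ a_sigma p τ ∧ q = (x, Multiset.replicate y ())})
    (S : L → Set Proc)
    (hS : ∀ x, S x = {p | ∃ τ, x ∈ h_labels p τ}) :
    -- HΣ Liveness
    ∀ p ∈ Correct, ∃ τ, ∀ τ', τ ≤ τ' → ∃ x m, (x, m) ∈ h_quora p τ' ∧
      m ≤ Multiset.replicate ((S x ∩ Correct).ncard) () :=
  astohs_liveness_general Correct a_sigma SA hSA aLiveness h_labels hlab h_quora hquo S hS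
end

section
/- Let Π be an anonymous system with an evolving failure pattern F (antitone F : ℕ → Finset Π with Correct = ⋂_τ F(τ) nonempty), and let anap be an AP̄-history for F. Define (a process takes steps only while alive) h_labels_p^τ := {⊥^{anap_p^{τ'}} : τ' ≤ τ and p ∈ F(τ')} and h_quora_p^τ := {(⊥^{anap_p^{τ'}}, ⊥^{anap_p^{τ'}}) : τ' ≤ τ and p ∈ F(τ')}, where labels are themselves multisets of copies of ⊥. Then (h_quora, h_labels) satisfies all four HΣ properties (Validity, Monotonicity, Liveness, Safety). (A failure detector of class HΣ can be obtained from any detector of class AP̄ in an anonymous asynchronous system without communication.) -/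
/-!
Every label and quorum of the derived history is `⊥^n` with `n = anap p σ` for a time `σ` at which
`p` was alive, so Validity and Monotonicity are immediate, and Liveness is witnessed after AP̄
stabilises by the label `⊥^|Correct|`, which every correct process holds.

For Safety, let `Q₁, Q₂` be disjoint quorums of sizes `n₁, n₂ > 0` whose members once output
`n₁` resp. `n₂`. Take the earliest of these outputs, at time `σ` by process `q`. Since `F` is
antitone, all of `Q₁ ∪ Q₂` is alive at `σ`, so AP̄ Safety gives
`n₁ + n₂ ≤ |F σ| ≤ anap q σ ∈ {n₁, n₂}`, which is absurd.
-/

namespace HSigmaOfAPbar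

open Multiset

variable {Proc : Type*} (F : ℕ → Finset Proc) (anap : Proc → ℕ → ℕ)

def labels (p : Proc) (τ : ℕ) : Set (Multiset Unit) :=
  {x | ∃ τ' ≤ τ, p ∈ F τ' ∧ x = replicate (anap p τ') ()}

def quora (p : Proc) (τ : ℕ) : Set (Multiset Unit × Multiset Unit) :=
  {q | ∃ τ' ≤ τ, p ∈ F τ' ∧ q = (replicate (anap p τ') (), replicate (anap p τ') ())}

def holders (x : Multiset Unit) : Set Proc :=
  {p | ∃ τ, x ∈ labels F anap p τ}

variable {F anap}

theorem mem_quora {p : Proc} {τ : ℕ} {x m : Multiset Unit} :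
    (x, m) ∈ quora F anap p τ ↔ ∃ τ' ≤ τ, p ∈ F τ' ∧ x = replicate (anap p τ') () ∧ m = x := by
  simp only [quora, Set.mem_ofPred_eq, Prod.mk.injEq]
  grind

theorem mem_holders_replicate {p : Proc} {n : ℕ} :
    p ∈ holders F anap (replicate n ()) ↔ ∃ σ, p ∈ F σ ∧ anap p σ = n := by
  simp only [holders, labels, Set.mem_ofPred_eq, (replicate_left_injective ()).eq_iff]
  exact ⟨fun ⟨_, σ, _, hp, h⟩ => ⟨σ, hp, h.symm⟩, fun ⟨σ, hp, h⟩ => ⟨σ, σ, le_rfl, hp, h.symm⟩⟩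

theorem labels_mono (p : Proc) : Monotone (labels F anap p) :=
  fun _ _ hττ' _ ⟨σ, hσ, hp, hx⟩ => ⟨σ, hσ.trans hττ', hp, hx⟩

theorem quora_mono (p : Proc) : Monotone (quora F anap p) :=
  fun _ _ hττ' _ ⟨σ, hσ, hp, hq⟩ => ⟨σ, hσ.trans hττ', hp, hq⟩

theorem quora_validity {p : Proc} {τ : ℕ} {x m m' : Multiset Unit}
    (h : (x, m) ∈ quora F anap p τ) (h' : (x, m') ∈ quora F anap p τ) : m = m' := by
  obtain ⟨-, -, -, -, rfl⟩ := mem_quora.1 h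
  obtain ⟨-, -, -, -, rfl⟩ := mem_quora.1 h'
  rfl

theorem quora_liveness {Correct : Set Proc} (hCorrect : ∀ τ, Correct ⊆ F τ)
    {τ₀ : ℕ} (hstable : ∀ p ∈ Correct, ∀ τ, τ₀ ≤ τ → anap p τ = Correct.ncard)
    {p : Proc} (hp : p ∈ Correct) {τ : ℕ} (hτ : τ₀ ≤ τ) :
    ∃ x m, (x, m) ∈ quora F anap p τ ∧
      m ≤ replicate ((holders F anap x ∩ Correct).ncard) () := by
  have hheld : Correct ⊆ holders F anap (replicate Correct.ncard ()) := fun q hq =>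
    mem_holders_replicate.2 ⟨τ₀, hCorrect τ₀ hq, hstable q hq τ₀ le_rfl⟩
  refine ⟨_, _, ⟨τ, le_rfl, hCorrect τ hp, by rw [hstable p hp τ hτ]⟩, ?_⟩
  rw [Set.inter_eq_right.2 hheld]

theorem exists_ncard_le_anap (hF : Antitone F) (hsafe : ∀ p τ, (F τ).card ≤ anap p τ)
    {Q : Set Proc} (hne : Q.Nonempty) {P : Proc → ℕ → Prop}
    (hQ : ∀ p ∈ Q, ∃ σ, p ∈ F σ ∧ P p σ) :
    ∃ q σ, P q σ ∧ Q.ncard ≤ anap q σ := by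
  classical
  have hex : ∃ σ, ∃ q ∈ Q, q ∈ F σ ∧ P q σ := by
    obtain ⟨q, hq⟩ := hne
    obtain ⟨σ, hσ⟩ := hQ q hq
    exact ⟨σ, q, hq, hσ⟩
  obtain ⟨q, -, -, hPq⟩ := Nat.find_spec hex
  have hQF : Q ⊆ F (Nat.find hex) := fun p hp => by
    obtain ⟨σ, hpF, hPp⟩ := hQ p hp
    exact hF (Nat.find_min' hex ⟨p, hp, hpF, hPp⟩) hpF
  refine ⟨q, _, hPq, ?_⟩
  calc Q.ncard ≤ (F (Nat.find hex) : Set Proc).ncard := Set.ncard_le_ncard hQF (Finset.finite_toSet _)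
    _ = (F (Nat.find hex)).card := Set.ncard_coe_finset _
    _ ≤ anap q (Nat.find hex) := hsafe q _

theorem inter_nonempty_of_subset_holders (hF : Antitone F)
    (hsafe : ∀ p τ, (F τ).card ≤ anap p τ) {Q₁ Q₂ : Set Proc}
    (hQ₁ : Q₁ ⊆ holders F anap (replicate Q₁.ncard ()))
    (hQ₂ : Q₂ ⊆ holders F anap (replicate Q₂.ncard ()))
    (hpos₁ : 0 < Q₁.ncard) (hpos₂ : 0 < Q₂.ncard) : (Q₁ ∩ Q₂).Nonempty := by
  by_contra hdisj
  rw [Set.not_nonempty_iff_eq_empty, ← Set.disjoint_iff_inter_eq_empty] at hdisj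
  have hwitness : ∀ p ∈ Q₁ ∪ Q₂, ∃ σ, p ∈ F σ ∧ (anap p σ = Q₁.ncard ∨ anap p σ = Q₂.ncard) := by
    rintro p (hp | hp)
    · obtain ⟨σ, hpF, h⟩ := mem_holders_replicate.1 (hQ₁ hp)
      exact ⟨σ, hpF, .inl h⟩
    · obtain ⟨σ, hpF, h⟩ := mem_holders_replicate.1 (hQ₂ hp)
      exact ⟨σ, hpF, .inr h⟩
  obtain ⟨q, σ, hqσ, hle⟩ :=
    exists_ncard_le_anap hF hsafe ((Set.nonempty_of_ncard_ne_zero hpos₁.ne').inl) hwitness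
  rw [Set.ncard_union_eq hdisj (Set.finite_of_ncard_pos hpos₁)
    (Set.finite_of_ncard_pos hpos₂)] at hle
  omega

theorem quora_safety (hF : Antitone F) (hsafe : ∀ p τ, (F τ).card ≤ anap p τ)
    {p₁ p₂ : Proc} {τ₁ τ₂ : ℕ} {x₁ m₁ x₂ m₂ : Multiset Unit}
    (h₁ : (x₁, m₁) ∈ quora F anap p₁ τ₁) (h₂ : (x₂, m₂) ∈ quora F anap p₂ τ₂)
    {Q₁ Q₂ : Set Proc} (hQ₁ : Q₁ ⊆ holders F anap x₁) (hQ₂ : Q₂ ⊆ holders F anap x₂)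
    (hm₁ : replicate Q₁.ncard () = m₁) (hm₂ : replicate Q₂.ncard () = m₂) :
    (Q₁ ∩ Q₂).Nonempty := by
  obtain ⟨σ₁, -, hp₁, rfl, rfl⟩ := mem_quora.1 h₁
  obtain ⟨σ₂, -, hp₂, rfl, rfl⟩ := mem_quora.1 h₂
  rw [(replicate_left_injective ()).eq_iff] at hm₁ hm₂
  have hpos : ∀ {p σ}, p ∈ F σ → 0 < anap p σ :=
    fun hp => (Finset.card_pos.2 ⟨_, hp⟩).trans_le (hsafe _ _)
  rw [← hm₁] at hQ₁
  rw [← hm₂] at hQ₂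
  exact inter_nonempty_of_subset_holders hF hsafe hQ₁ hQ₂ (hm₁ ▸ hpos hp₁) (hm₂ ▸ hpos hp₂)

end HSigmaOfAPbar

open HSigmaOfAPbar in
theorem ap_to_hs_all_general
    {Proc : Type*}
    (F : ℕ → Finset Proc) (hF : Antitone F)
    (Correct : Set Proc)
    (hCdef : Correct = ⋂ τ, (F τ : Set Proc))
    (anap : Proc → ℕ → ℕ)
    -- AP̄ Safety
    (apSafety : ∀ p τ, (F τ).card ≤ anap p τ)
    -- AP̄ Liveness
    (apLiveness : ∃ τ, ∀ p ∈ Correct, ∀ τ', τ ≤ τ' → anap p τ' = Correct.ncard)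
    -- the derived HΣ history
    (h_labels : Proc → ℕ → Set (Multiset Unit))
    (hlab : ∀ p τ, h_labels p τ =
      {x | ∃ τ' ≤ τ, p ∈ F τ' ∧ x = Multiset.replicate (anap p τ') ()})
    (h_quora : Proc → ℕ → Set (Multiset Unit × Multiset Unit))
    (hquo : ∀ p τ, h_quora p τ =
      {q | ∃ τ' ≤ τ, p ∈ F τ' ∧
        q = (Multiset.replicate (anap p τ') (), Multiset.replicate (anap p τ') ())})
    (S : Multiset Unit → Set Proc)
    (hS : ∀ x, S x = {p | ∃ τ, x ∈ h_labels p τ}) :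
    -- HΣ Validity
    (∀ p τ x m m', (x, m) ∈ h_quora p τ → (x, m') ∈ h_quora p τ → m = m') ∧
    -- HΣ Monotonicity
    (∀ p τ τ', τ ≤ τ' → h_labels p τ ⊆ h_labels p τ' ∧
      ∀ x m, (x, m) ∈ h_quora p τ → ∃ m' ≤ m, (x, m') ∈ h_quora p τ') ∧
    -- HΣ Liveness
    (∀ p ∈ Correct, ∃ τ, ∀ τ', τ ≤ τ' → ∃ x m, (x, m) ∈ h_quora p τ' ∧
      m ≤ Multiset.replicate ((S x ∩ Correct).ncard) ()) ∧
    -- HΣ Safety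
    (∀ p₁ p₂ τ₁ τ₂ x₁ m₁ x₂ m₂,
      (x₁, m₁) ∈ h_quora p₁ τ₁ → (x₂, m₂) ∈ h_quora p₂ τ₂ →
      ∀ Q₁ Q₂ : Set Proc, Q₁ ⊆ S x₁ → Q₂ ⊆ S x₂ →
      Multiset.replicate Q₁.ncard () = m₁ → Multiset.replicate Q₂.ncard () = m₂ →
      (Q₁ ∩ Q₂).Nonempty) := by
  obtain rfl : h_labels = labels F anap := funext₂ hlab
  obtain rfl : h_quora = quora F anap := funext₂ hquo
  obtain rfl : S = holders F anap := funext hS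
  have hCorrect : ∀ τ, Correct ⊆ F τ := fun τ => hCdef ▸ Set.iInter_subset _ τ
  obtain ⟨τ₀, hstable⟩ := apLiveness
  refine ⟨fun _ _ _ _ _ => quora_validity, fun p τ τ' hττ' => ⟨labels_mono p hττ', ?_⟩,
    fun p hp => ⟨τ₀, fun _ hτ => quora_liveness hCorrect hstable hp hτ⟩,
    fun _ _ _ _ _ _ _ _ h₁ h₂ _ _ => quora_safety hF apSafety h₁ h₂⟩
  exact fun x m hm => ⟨m, le_rfl, quora_mono p hττ' hm⟩

/-- In an anonymous system with an evolving failure pattern `F`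
(antitone, `Correct = ⋂ τ, F τ` nonempty), if `anap` is an AP̄-history
(Safety and Liveness), then the derived pair `(h_quora, h_labels)`, where a
process contributes the label `⊥^{anap p τ'}` (and the pair
`(⊥^{anap p τ'}, ⊥^{anap p τ'})`) for each time `τ' ≤ τ` at which it was
alive, satisfies the four HΣ properties.  Here labels are themselves
multisets of copies of `⊥ = ()`, and `I(Q) = ⊥^{|Q|}`. -/
theorem ap_to_hs_all
    {Proc : Type*} [Fintype Proc] [Nonempty Proc]
    (F : ℕ → Finset Proc) (hF : Antitone F)
    (Correct : Set Proc)
    (hCdef : Correct = ⋂ τ, (F τ : Set Proc)) (hC : Correct.Nonempty)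
    (anap : Proc → ℕ → ℕ)
    -- AP̄ Safety
    (apSafety : ∀ p τ, (F τ).card ≤ anap p τ)
    -- AP̄ Liveness
    (apLiveness : ∃ τ, ∀ p ∈ Correct, ∀ τ', τ ≤ τ' → anap p τ' = Correct.ncard)
    -- the derived HΣ history
    (h_labels : Proc → ℕ → Set (Multiset Unit))
    (hlab : ∀ p τ, h_labels p τ =
      {x | ∃ τ' ≤ τ, p ∈ F τ' ∧ x = Multiset.replicate (anap p τ') ()})
    (h_quora : Proc → ℕ → Set (Multiset Unit × Multiset Unit))
    (hquo : ∀ p τ, h_quora p τ =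
      {q | ∃ τ' ≤ τ, p ∈ F τ' ∧
        q = (Multiset.replicate (anap p τ') (), Multiset.replicate (anap p τ') ())})
    (S : Multiset Unit → Set Proc)
    (hS : ∀ x, S x = {p | ∃ τ, x ∈ h_labels p τ}) :
    -- HΣ Validity
    (∀ p τ x m m', (x, m) ∈ h_quora p τ → (x, m') ∈ h_quora p τ → m = m') ∧
    -- HΣ Monotonicity
    (∀ p τ τ', τ ≤ τ' → h_labels p τ ⊆ h_labels p τ' ∧
      ∀ x m, (x, m) ∈ h_quora p τ → ∃ m' ≤ m, (x, m') ∈ h_quora p τ') ∧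
    -- HΣ Liveness
    (∀ p ∈ Correct, ∃ τ, ∀ τ', τ ≤ τ' → ∃ x m, (x, m) ∈ h_quora p τ' ∧
      m ≤ Multiset.replicate ((S x ∩ Correct).ncard) ()) ∧
    -- HΣ Safety
    (∀ p₁ p₂ τ₁ τ₂ x₁ m₁ x₂ m₂,
      (x₁, m₁) ∈ h_quora p₁ τ₁ → (x₂, m₂) ∈ h_quora p₂ τ₂ →
      ∀ Q₁ Q₂ : Set Proc, Q₁ ⊆ S x₁ → Q₂ ⊆ S x₂ →
      Multiset.replicate Q₁.ncard () = m₁ → Multiset.replicate Q₂.ncard () = m₂ →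
      (Q₁ ∩ Q₂).Nonempty) :=
  ap_to_hs_all_general F hF Correct hCdef anap apSafety apLiveness h_labels hlab h_quora hquo S hS
end

section
/- Let Π be a finite type, F : ℕ → Finset Π antitone with Correct = ⋂_τ F(τ) nonempty, and anap : Π → ℕ → ℕ satisfy anap_p^τ ≥ |F(τ)| for all p ∈ Π and τ ∈ ℕ. For y ∈ ℕ define S(y) := {p ∈ Π : ∃τ, p ∈ F(τ) and anap_p^τ = y}. If S(y) ≠ ∅, then every Q ⊆ S(y) with |Q| = y satisfies Correct ⊆ Q. Consequently, for any y₁, y₂ with S(y₁) ≠ ∅ and S(y₂) ≠ ∅, any Q₁ ⊆ S(y₁) with |Q₁| = y₁ and any Q₂ ⊆ S(y₂) with |Q₂| = y₂ satisfy Correct ⊆ Q₁ ∩ Q₂, and in particular Q₁ ∩ Q₂ ≠ ∅. (This is the quorum-intersection core of the safety proof of the reduction from AP̄ to HΣ.) -/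
/-! A process alive while outputting `y` forces `y ≥ 1`, so `Q` is nonempty. Every member `q`
of `Q ⊆ S y` was alive at some time `τ_q` at which at most `y` processes were alive. At the
earliest of these times `τ`, all of `Q` is still alive, so `Q ⊆ F τ` while `|F τ| ≤ y = |Q|`;
hence `Q = F τ ⊇ Correct`. -/

theorem Antitone.exists_coe_eq_of_forall_mem_card_le {ι α : Type*} [LinearOrder ι]
    {F : ι → Finset α} (hF : Antitone F) {Q : Set α} (hQ : Q.Finite) (hQne : Q.Nonempty)
    (h : ∀ q ∈ Q, ∃ τ, q ∈ F τ ∧ (F τ).card ≤ Q.ncard) : ∃ τ, (F τ : Set α) = Q := by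
  have : Nonempty ι := let ⟨q, hq⟩ := hQne; ⟨(h q hq).choose⟩
  choose! τ hτF hτcard using h
  obtain ⟨q₀, hq₀, hmin⟩ := Set.exists_min_image Q τ hQ hQne
  have hQsub : Q ⊆ F (τ q₀) := fun q hq => hF (hmin q hq) (hτF q hq)
  refine ⟨τ q₀, (Set.eq_of_subset_of_ncard_le hQsub ?_ (F (τ q₀)).finite_toSet).symm⟩
  rw [Set.ncard_coe_finset]
  exact hτcard q₀ hq₀

/-- Quorum-intersection core of the safety proof of the reduction
from AP̄ to HΣ.  With `F` antitone, `Correct = ⋂ τ, F τ` nonempty, and `anap`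
satisfying the AP̄ Safety property, let `S y` be the set of processes that at
some time while alive output `y`.  If `S y ≠ ∅`, then every `Q ⊆ S y` with
`|Q| = y` contains `Correct`; consequently any two such quora (for values
`y₁, y₂`) both contain `Correct` and hence intersect. -/
theorem ap_quorum_intersection
    {Proc : Type*} [Fintype Proc]
    (F : ℕ → Finset Proc) (hF : Antitone F)
    (Correct : Set Proc)
    (hCdef : Correct = ⋂ τ, (F τ : Set Proc)) (hC : Correct.Nonempty)
    (anap : Proc → ℕ → ℕ)
    (apSafety : ∀ p τ, (F τ).card ≤ anap p τ)
    (S : ℕ → Set Proc)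
    (hS : ∀ y, S y = {p | ∃ τ, p ∈ F τ ∧ anap p τ = y}) :
    (∀ y, (S y).Nonempty → ∀ Q ⊆ S y, Q.ncard = y → Correct ⊆ Q) ∧
    (∀ y₁ y₂, (S y₁).Nonempty → (S y₂).Nonempty →
      ∀ Q₁ ⊆ S y₁, ∀ Q₂ ⊆ S y₂, Q₁.ncard = y₁ → Q₂.ncard = y₂ →
      Correct ⊆ Q₁ ∩ Q₂ ∧ (Q₁ ∩ Q₂).Nonempty) := by
  subst hCdef
  have hmemS : ∀ {y p}, p ∈ S y → ∃ τ, p ∈ F τ ∧ anap p τ = y := fun h => by rwa [hS] at h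
  have quorum : ∀ y, (S y).Nonempty → ∀ Q ⊆ S y, Q.ncard = y → ⋂ τ, (F τ : Set Proc) ⊆ Q := by
    rintro y ⟨p, hp⟩ Q hQS rfl
    obtain ⟨τp, hpF, hpy⟩ := hmemS hp
    have hQne : Q.Nonempty := Set.nonempty_of_ncard_ne_zero <|
      (Finset.card_pos.2 ⟨p, hpF⟩).trans_le (hpy ▸ apSafety p τp) |>.ne'
    have hQalive : ∀ q ∈ Q, ∃ τ, q ∈ F τ ∧ (F τ).card ≤ Q.ncard := fun q hq => by
      obtain ⟨τ, hqF, hqy⟩ := hmemS (hQS hq)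
      exact ⟨τ, hqF, hqy ▸ apSafety q τ⟩
    obtain ⟨τ, hτ⟩ := hF.exists_coe_eq_of_forall_mem_card_le Q.toFinite hQne hQalive
    exact hτ ▸ Set.iInter_subset _ τ
  refine ⟨quorum, fun y₁ y₂ h₁ h₂ Q₁ hQ₁ Q₂ hQ₂ hc₁ hc₂ => ?_⟩
  have hsub := Set.subset_inter (quorum y₁ h₁ Q₁ hQ₁ hc₁) (quorum y₂ h₂ Q₂ hQ₂ hc₂)
  exact ⟨hsub, hC.mono hsub⟩
end

section
/- Let Π be a finite type, F : ℕ → Finset Π antitone, and anap : Π → ℕ → ℕ satisfy anap_p^τ ≥ |F(τ)| for all p ∈ Π and τ ∈ ℕ. For y ∈ ℕ define S(y) := {p ∈ Π : ∃τ, p ∈ F(τ) and anap_p^τ = y}. Then for every y with S(y) ≠ ∅, |S(y)| ≤ y. -/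
/-! All of `S y` is still alive at the first time `τ₀` at which some alive process outputs `y`,
since `F` is antitone; that process `q` witnesses `|S y| ≤ |F τ₀| ≤ anap q τ₀ = y`. -/

theorem Antitone.exists_mem_and_setOf_subset {α : Type*} {F : ℕ → Set α} (hF : Antitone F)
    {R : α → ℕ → Prop} (hne : {p | ∃ τ, p ∈ F τ ∧ R p τ}.Nonempty) :
    ∃ τ₀ q, q ∈ F τ₀ ∧ R q τ₀ ∧ {p | ∃ τ, p ∈ F τ ∧ R p τ} ⊆ F τ₀ := by
  classical
  have hex : ∃ τ, ∃ q, q ∈ F τ ∧ R q τ := by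
    obtain ⟨p, τ, hp⟩ := hne
    exact ⟨τ, p, hp⟩
  obtain ⟨q, hq⟩ := Nat.find_spec hex
  refine ⟨Nat.find hex, q, hq.1, hq.2, ?_⟩
  rintro p ⟨τ, hpτ, hRτ⟩
  exact hF (Nat.find_le ⟨p, hpτ, hRτ⟩) hpτ

theorem ap_quorum_card_le_general
    {Proc : Type*}
    (F : ℕ → Finset Proc) (hF : Antitone F)
    (anap : Proc → ℕ → ℕ)
    (apSafety : ∀ p τ, (F τ).card ≤ anap p τ)
    (S : ℕ → Set Proc)
    (hS : ∀ y, S y = {p | ∃ τ, p ∈ F τ ∧ anap p τ = y}) :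
    ∀ y, (S y).Nonempty → (S y).ncard ≤ y := by
  intro y hne
  have hF' : Antitone fun τ => (F τ : Set Proc) := fun _ _ h => Finset.coe_subset.mpr (hF h)
  rw [hS] at hne ⊢
  obtain ⟨τ₀, q, hq, hqy, hsub⟩ := hF'.exists_mem_and_setOf_subset hne
  calc {p | ∃ τ, p ∈ F τ ∧ anap p τ = y}.ncard
      ≤ (F τ₀ : Set Proc).ncard := Set.ncard_le_ncard hsub (F τ₀).finite_toSet
    _ = (F τ₀).card := Set.ncard_coe_finset _
    _ ≤ anap q τ₀ := apSafety q τ₀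
    _ = y := hqy

/-- With `F` antitone and `anap` satisfying the AP̄ Safety
property, let `S y` be the set of processes that at some time while alive
output `y`.  Then for every `y` with `S y ≠ ∅`, `|S y| ≤ y`. -/
theorem ap_quorum_card_le
    {Proc : Type*} [Fintype Proc]
    (F : ℕ → Finset Proc) (hF : Antitone F)
    (anap : Proc → ℕ → ℕ)
    (apSafety : ∀ p τ, (F τ).card ≤ anap p τ)
    (S : ℕ → Set Proc)
    (hS : ∀ y, S y = {p | ∃ τ, p ∈ F τ ∧ anap p τ = y}) :
    ∀ y, (S y).Nonempty → (S y).ncard ≤ y :=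
  ap_quorum_card_le_general F hF anap apSafety S hS
end

section
/- Let Π be an anonymous system with an evolving failure pattern F (antitone F : ℕ → Finset Π with Correct = ⋂_τ F(τ) nonempty), and let anap be an AP̄-history for F (satisfying both Safety and Liveness). Define h_labels_p^τ := {⊥^{anap_p^{τ'}} : τ' ≤ τ and p ∈ F(τ')} and h_quora_p^τ := {(⊥^{anap_p^{τ'}}, ⊥^{anap_p^{τ'}}) : τ' ≤ τ and p ∈ F(τ')}. Then (h_quora, h_labels) satisfies the HΣ Liveness property: for every p ∈ Correct there is τ such that for every τ' ≥ τ some (x,m) ∈ h_quora_p^{τ'} has m ⊆ I(S(x) ∩ Correct), where S(x) := {q ∈ Π : ∃τ, x ∈ h_labels_q^τ}; the witnessing label is x = ⊥^{|Correct|}. -/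
/-!
Let `τ₀` be the time from which AP̄ returns `|Correct|` at every correct process. At `τ₀` every
correct process, being alive, records the label `x = ⊥^{|Correct|}`, so `Correct ⊆ S(x)` and
`I(S(x) ∩ Correct) = x`; and from `τ₀` on a correct `p` holds the quorum `(x, x)`.
-/

theorem ap_to_hs_liveness_general
    {Proc : Type*}
    (F : ℕ → Finset Proc)
    (Correct : Set Proc)
    (hCdef : Correct = ⋂ τ, (F τ : Set Proc))
    (anap : Proc → ℕ → ℕ)
    -- AP̄ Liveness
    (apLiveness : ∃ τ, ∀ p ∈ Correct, ∀ τ', τ ≤ τ' → anap p τ' = Correct.ncard)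
    (h_labels : Proc → ℕ → Set (Multiset Unit))
    (hlab : ∀ p τ, h_labels p τ =
      {x | ∃ τ' ≤ τ, p ∈ F τ' ∧ x = Multiset.replicate (anap p τ') ()})
    (h_quora : Proc → ℕ → Set (Multiset Unit × Multiset Unit))
    (hquo : ∀ p τ, h_quora p τ =
      {q | ∃ τ' ≤ τ, p ∈ F τ' ∧
        q = (Multiset.replicate (anap p τ') (), Multiset.replicate (anap p τ') ())})
    (S : Multiset Unit → Set Proc)
    (hS : ∀ x, S x = {q | ∃ τ, x ∈ h_labels q τ}) :
    -- HΣ Liveness, with witnessing label x = ⊥^{|Correct|}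
    ∀ p ∈ Correct, ∃ τ, ∀ τ', τ ≤ τ' → ∃ m,
      (Multiset.replicate Correct.ncard (), m) ∈ h_quora p τ' ∧
      m ≤ Multiset.replicate
            ((S (Multiset.replicate Correct.ncard ()) ∩ Correct).ncard) () := by
  obtain ⟨τ₀, stable⟩ := apLiveness
  have alive : ∀ q ∈ Correct, ∀ τ, q ∈ F τ := fun q hq τ =>
    (hCdef ▸ Set.iInter_subset (fun τ => (F τ : Set Proc)) τ) hq
  have labelled : S (Multiset.replicate Correct.ncard ()) ∩ Correct = Correct := by
    refine Set.inter_eq_right.mpr fun q hq => ?_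
    rw [hS]
    exact ⟨τ₀, by rw [hlab]; exact ⟨τ₀, le_rfl, alive q hq τ₀, by rw [stable q hq τ₀ le_rfl]⟩⟩
  intro p hp
  refine ⟨τ₀, fun τ hτ => ⟨Multiset.replicate Correct.ncard (), ?_, by rw [labelled]⟩⟩
  rw [hquo]
  exact ⟨τ, le_rfl, alive p hp τ, by rw [stable p hp τ hτ]⟩

/-- In an anonymous system with an evolving failure pattern `F`
(antitone, `Correct = ⋂ τ, F τ` nonempty), if `anap` is an AP̄-history
(Safety and Liveness), then the derived pair `(h_quora, h_labels)` satisfies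
the HΣ Liveness property, with witnessing label `x = ⊥^{|Correct|}`.
Here `I(Q) = ⊥^{|Q|}` and `⊥ = ()`. -/
theorem ap_to_hs_liveness
    {Proc : Type*} [Fintype Proc] [Nonempty Proc]
    (F : ℕ → Finset Proc) (hF : Antitone F)
    (Correct : Set Proc)
    (hCdef : Correct = ⋂ τ, (F τ : Set Proc)) (hC : Correct.Nonempty)
    (anap : Proc → ℕ → ℕ)
    -- AP̄ Safety
    (apSafety : ∀ p τ, (F τ).card ≤ anap p τ)
    -- AP̄ Liveness
    (apLiveness : ∃ τ, ∀ p ∈ Correct, ∀ τ', τ ≤ τ' → anap p τ' = Correct.ncard)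
    (h_labels : Proc → ℕ → Set (Multiset Unit))
    (hlab : ∀ p τ, h_labels p τ =
      {x | ∃ τ' ≤ τ, p ∈ F τ' ∧ x = Multiset.replicate (anap p τ') ()})
    (h_quora : Proc → ℕ → Set (Multiset Unit × Multiset Unit))
    (hquo : ∀ p τ, h_quora p τ =
      {q | ∃ τ' ≤ τ, p ∈ F τ' ∧
        q = (Multiset.replicate (anap p τ') (), Multiset.replicate (anap p τ') ())})
    (S : Multiset Unit → Set Proc)
    (hS : ∀ x, S x = {q | ∃ τ, x ∈ h_labels q τ}) :
    -- HΣ Liveness, with witnessing label x = ⊥^{|Correct|}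
    ∀ p ∈ Correct, ∃ τ, ∀ τ', τ ≤ τ' → ∃ m,
      (Multiset.replicate Correct.ncard (), m) ∈ h_quora p τ' ∧
      m ≤ Multiset.replicate
            ((S (Multiset.replicate Correct.ncard ()) ∩ Correct).ncard) () :=
  ap_to_hs_liveness_general F Correct hCdef anap apLiveness h_labels hlab h_quora hquo S hS
end

section
/- Let Π be a system with unique identifiers (id : Π → Ident injective) and failure pattern Correct, and let trusted be a Σ-history with trusted_p^τ ⊆ I(Π) for all p and τ. Define (labels are finite sets of identifiers) h_labels_p^τ := {s : s ⊆ I(Π) and id(p) ∈ s} for every τ, and h_quora_p^τ := {(q, q̂) : ∃τ' ≤ τ, q = trusted_p^{τ'}}, where q̂ is the finite set q viewed as a multiset (each identifier with multiplicity 1). Then (h_quora, h_labels) satisfies all four HΣ properties (Validity, Monotonicity, Liveness, Safety). (A failure detector of class HΣ can be obtained from any detector of class Σ without communication when every process initially knows the membership I(Π); part of Theorem 1.) -/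
/-! The quora of `p` are the values of `trusted_p` seen so far, each read as a multiset without
repetitions, and every subset of `I(Π)` is a label of each of its members. Validity and
Monotonicity are then immediate, HΣ-Liveness is Σ-Liveness, and HΣ-Safety is Σ-Safety: a common
identifier of two trusted sets is, by injectivity of `id`, a common process of any `Q₁, Q₂`
carrying those identifiers. -/

/-- `idsOf ident S` is the multiset `I(S)` of identifiers of the processes
in the (necessarily finite) set `S`. -/
noncomputable def idsOf {Proc Ident : Type*} [Fintype Proc]
    (ident : Proc → Ident) (S : Set Proc) : Multiset Ident :=
  (Set.toFinite S).toFinset.val.map ident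

section IdentifierMultisets

variable {Proc Ident : Type*} [Fintype Proc] (ident : Proc → Ident)

theorem mem_idsOf {S : Set Proc} {i : Ident} : i ∈ idsOf ident S ↔ ∃ p ∈ S, ident p = i := by
  simp [idsOf]

theorem val_le_idsOf {s : Finset Ident} {S : Set Proc} (h : ∀ i ∈ s, ∃ p ∈ S, ident p = i) :
    s.val ≤ idsOf ident S :=
  (Multiset.le_iff_subset s.nodup).2 fun i hi => (mem_idsOf ident).2 (h i hi)

variable {ident}

theorem inter_nonempty_of_mem_idsOf (hinj : Function.Injective ident) {Q₁ Q₂ : Set Proc}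
    {i : Ident} (h₁ : i ∈ idsOf ident Q₁) (h₂ : i ∈ idsOf ident Q₂) : (Q₁ ∩ Q₂).Nonempty := by
  obtain ⟨p, hp, rfl⟩ := (mem_idsOf ident).1 h₁
  obtain ⟨q, hq, hqp⟩ := (mem_idsOf ident).1 h₂
  exact ⟨p, hp, hinj hqp ▸ hq⟩

end IdentifierMultisets

section SigmaQuora

variable {Proc Ident : Type*} (trusted : Proc → ℕ → Finset Ident)

def sigmaQuora (p : Proc) (τ : ℕ) : Set (Finset Ident × Multiset Ident) :=
  {q | ∃ τ' ≤ τ, q = (trusted p τ', (trusted p τ').val)}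

variable {trusted}

theorem mem_sigmaQuora {p : Proc} {τ : ℕ} {x : Finset Ident} {m : Multiset Ident} :
    (x, m) ∈ sigmaQuora trusted p τ ↔ ∃ τ' ≤ τ, x = trusted p τ' ∧ m = x.val := by
  constructor
  · rintro ⟨τ', hτ', ⟨⟩⟩
    exact ⟨τ', hτ', rfl, rfl⟩
  · rintro ⟨τ', hτ', rfl, rfl⟩
    exact ⟨τ', hτ', rfl⟩

theorem sigmaQuora_mono (p : Proc) : Monotone (sigmaQuora trusted p) :=
  fun _ _ hτ _ ⟨τ', hτ', hq⟩ => ⟨τ', hτ'.trans hτ, hq⟩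

end SigmaQuora

theorem sigma_to_hs_all_general
    {Proc Ident : Type*} [Fintype Proc] [DecidableEq Ident]
    (ident : Proc → Ident) (hinj : Function.Injective ident)
    (Correct : Set Proc)
    (trusted : Proc → ℕ → Finset Ident)
    (htr : ∀ p τ, trusted p τ ⊆ Finset.univ.image ident)
    -- Σ Liveness: eventually trusted_p ⊆ I(Correct)
    (sLiveness : ∀ p ∈ Correct, ∃ τ, ∀ τ', τ ≤ τ' →
      ∀ i ∈ trusted p τ', ∃ q ∈ Correct, ident q = i)
    -- Σ Safety
    (sSafety : ∀ p q τ τ', (trusted p τ ∩ trusted q τ').Nonempty)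
    -- the derived HΣ history (labels are finite sets of identifiers)
    (h_labels : Proc → ℕ → Set (Finset Ident))
    (hlab : ∀ p τ, h_labels p τ =
      {s | s ⊆ Finset.univ.image ident ∧ ident p ∈ s})
    (h_quora : Proc → ℕ → Set (Finset Ident × Multiset Ident))
    (hquo : ∀ p τ, h_quora p τ =
      {q | ∃ τ' ≤ τ, q = (trusted p τ', (trusted p τ').val)})
    (S : Finset Ident → Set Proc)
    (hS : ∀ x, S x = {p | ∃ τ, x ∈ h_labels p τ}) :
    -- HΣ Validity
    (∀ p τ x m m', (x, m) ∈ h_quora p τ → (x, m') ∈ h_quora p τ → m = m') ∧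
    -- HΣ Monotonicity
    (∀ p τ τ', τ ≤ τ' → h_labels p τ ⊆ h_labels p τ' ∧
      ∀ x m, (x, m) ∈ h_quora p τ → ∃ m' ≤ m, (x, m') ∈ h_quora p τ') ∧
    -- HΣ Liveness
    (∀ p ∈ Correct, ∃ τ, ∀ τ', τ ≤ τ' → ∃ x m, (x, m) ∈ h_quora p τ' ∧
      m ≤ idsOf ident (S x ∩ Correct)) ∧
    -- HΣ Safety
    (∀ p₁ p₂ τ₁ τ₂ x₁ m₁ x₂ m₂,
      (x₁, m₁) ∈ h_quora p₁ τ₁ → (x₂, m₂) ∈ h_quora p₂ τ₂ →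
      ∀ Q₁ Q₂ : Set Proc, Q₁ ⊆ S x₁ → Q₂ ⊆ S x₂ →
      idsOf ident Q₁ = m₁ → idsOf ident Q₂ = m₂ → (Q₁ ∩ Q₂).Nonempty) := by
  obtain rfl : h_quora = sigmaQuora trusted := funext fun p => funext (hquo p)
  have mem_S : ∀ x p, x ⊆ Finset.univ.image ident → ident p ∈ x → p ∈ S x :=
    fun x p hx hp => by rw [hS]; exact ⟨0, by rw [hlab]; exact ⟨hx, hp⟩⟩
  refine ⟨?validity, ?monotonicity, ?liveness, ?safety⟩
  case validity =>
    intro p τ x m m' hm hm'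
    obtain ⟨-, -, -, rfl⟩ := mem_sigmaQuora.1 hm
    obtain ⟨-, -, -, rfl⟩ := mem_sigmaQuora.1 hm'
    rfl
  case monotonicity =>
    intro p τ τ' hτ
    exact ⟨by rw [hlab, hlab], fun x m hm => ⟨m, le_rfl, sigmaQuora_mono p hτ hm⟩⟩
  case liveness =>
    intro p hp
    obtain ⟨τ, hτ⟩ := sLiveness p hp
    refine ⟨τ, fun τ' hτ' => ⟨_, _, mem_sigmaQuora.2 ⟨τ', le_rfl, rfl, rfl⟩, ?_⟩⟩
    refine val_le_idsOf ident fun i hi => ?_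
    obtain ⟨q, hq, rfl⟩ := hτ τ' hτ' i hi
    exact ⟨q, ⟨mem_S _ _ (htr p τ') hi, hq⟩, rfl⟩
  case safety =>
    intro p₁ p₂ τ₁ τ₂ x₁ m₁ x₂ m₂ h₁ h₂ Q₁ Q₂ _ _ hQ₁ hQ₂
    obtain ⟨σ₁, -, rfl, rfl⟩ := mem_sigmaQuora.1 h₁
    obtain ⟨σ₂, -, rfl, rfl⟩ := mem_sigmaQuora.1 h₂
    obtain ⟨i, hi⟩ := sSafety p₁ p₂ σ₁ σ₂
    obtain ⟨hi₁, hi₂⟩ := Finset.mem_inter.1 hi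
    rw [← Finset.mem_val, ← hQ₁] at hi₁
    rw [← Finset.mem_val, ← hQ₂] at hi₂
    exact inter_nonempty_of_mem_idsOf hinj hi₁ hi₂

/-- In a system with unique identifiers where every process knows
the membership `I(Π)`, if `trusted` is a Σ-history (Liveness and Safety) with
`trusted_p^τ ⊆ I(Π)`, then the derived pair `(h_quora, h_labels)` — where the
labels of `p` are all the subsets of `I(Π)` containing `id(p)`, and the quora
of `p` at time `τ` are the pairs `(q, q̂)` for the values `q` taken by
`trusted_p` up to time `τ` — satisfies the four HΣ properties. -/
theorem sigma_to_hs_all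
    {Proc Ident : Type*} [Fintype Proc] [Nonempty Proc] [DecidableEq Ident]
    (ident : Proc → Ident) (hinj : Function.Injective ident)
    (Correct : Set Proc) (hC : Correct.Nonempty)
    (trusted : Proc → ℕ → Finset Ident)
    (htr : ∀ p τ, trusted p τ ⊆ Finset.univ.image ident)
    -- Σ Liveness: eventually trusted_p ⊆ I(Correct)
    (sLiveness : ∀ p ∈ Correct, ∃ τ, ∀ τ', τ ≤ τ' →
      ∀ i ∈ trusted p τ', ∃ q ∈ Correct, ident q = i)
    -- Σ Safety
    (sSafety : ∀ p q τ τ', (trusted p τ ∩ trusted q τ').Nonempty)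
    -- the derived HΣ history (labels are finite sets of identifiers)
    (h_labels : Proc → ℕ → Set (Finset Ident))
    (hlab : ∀ p τ, h_labels p τ =
      {s | s ⊆ Finset.univ.image ident ∧ ident p ∈ s})
    (h_quora : Proc → ℕ → Set (Finset Ident × Multiset Ident))
    (hquo : ∀ p τ, h_quora p τ =
      {q | ∃ τ' ≤ τ, q = (trusted p τ', (trusted p τ').val)})
    (S : Finset Ident → Set Proc)
    (hS : ∀ x, S x = {p | ∃ τ, x ∈ h_labels p τ}) :
    -- HΣ Validity
    (∀ p τ x m m', (x, m) ∈ h_quora p τ → (x, m') ∈ h_quora p τ → m = m') ∧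
    -- HΣ Monotonicity
    (∀ p τ τ', τ ≤ τ' → h_labels p τ ⊆ h_labels p τ' ∧
      ∀ x m, (x, m) ∈ h_quora p τ → ∃ m' ≤ m, (x, m') ∈ h_quora p τ') ∧
    -- HΣ Liveness
    (∀ p ∈ Correct, ∃ τ, ∀ τ', τ ≤ τ' → ∃ x m, (x, m) ∈ h_quora p τ' ∧
      m ≤ idsOf ident (S x ∩ Correct)) ∧
    -- HΣ Safety
    (∀ p₁ p₂ τ₁ τ₂ x₁ m₁ x₂ m₂,
      (x₁, m₁) ∈ h_quora p₁ τ₁ → (x₂, m₂) ∈ h_quora p₂ τ₂ →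
      ∀ Q₁ Q₂ : Set Proc, Q₁ ⊆ S x₁ → Q₂ ⊆ S x₂ →
      idsOf ident Q₁ = m₁ → idsOf ident Q₂ = m₂ → (Q₁ ∩ Q₂).Nonempty) :=
  sigma_to_hs_all_general ident hinj Correct trusted htr sLiveness sSafety h_labels hlab h_quora
    hquo S hS
end

section
/- Let Π be a system with unique identifiers (id : Π → Ident injective) and failure pattern Correct, and let trusted satisfy the Σ Liveness property with trusted_p^τ ⊆ I(Π) for all p and τ. Define h_labels_p^τ := {s : s ⊆ I(Π) and id(p) ∈ s} for every τ, and h_quora_p^τ := {(q, q̂) : ∃τ' ≤ τ, q = trusted_p^{τ'}}, where q̂ is the finite set q viewed as a multiset. Then (h_quora, h_labels) satisfies the HΣ Liveness property: for every p ∈ Correct there is τ such that for every τ' ≥ τ some (x,m) ∈ h_quora_p^{τ'} has m ⊆ I(S(x) ∩ Correct), where S(x) := {p ∈ Π : ∃τ, x ∈ h_labels_p^τ}. -/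
theorem val_le_idsOf_of_forall_mem {Proc Ident : Type*} [Fintype Proc]
    {ident : Proc → Ident} {T : Set Proc} {s : Finset Ident}
    (hs : ∀ i ∈ s, ∃ q ∈ T, ident q = i) : s.val ≤ idsOf ident T := by
  refine (Multiset.le_iff_subset s.nodup).mpr fun i hi => ?_
  obtain ⟨q, hqT, rfl⟩ := hs i hi
  exact Multiset.mem_map_of_mem ident (by simpa using hqT)

theorem sigma_to_hs_liveness_general
    {Proc Ident : Type*} [Fintype Proc] [DecidableEq Ident]
    (ident : Proc → Ident)
    (Correct : Set Proc)
    (trusted : Proc → ℕ → Finset Ident)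
    (htr : ∀ p τ, trusted p τ ⊆ Finset.univ.image ident)
    -- Σ Liveness: eventually trusted_p ⊆ I(Correct)
    (sLiveness : ∀ p ∈ Correct, ∃ τ, ∀ τ', τ ≤ τ' →
      ∀ i ∈ trusted p τ', ∃ q ∈ Correct, ident q = i)
    (h_labels : Proc → ℕ → Set (Finset Ident))
    (hlab : ∀ p τ, h_labels p τ =
      {s | s ⊆ Finset.univ.image ident ∧ ident p ∈ s})
    (h_quora : Proc → ℕ → Set (Finset Ident × Multiset Ident))
    (hquo : ∀ p τ, h_quora p τ =
      {q | ∃ τ' ≤ τ, q = (trusted p τ', (trusted p τ').val)})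
    (S : Finset Ident → Set Proc)
    (hS : ∀ x, S x = {p | ∃ τ, x ∈ h_labels p τ}) :
    -- HΣ Liveness
    ∀ p ∈ Correct, ∃ τ, ∀ τ', τ ≤ τ' → ∃ x m, (x, m) ∈ h_quora p τ' ∧
      m ≤ idsOf ident (S x ∩ Correct) := by
  have mem_S : ∀ x ⊆ Finset.univ.image ident, ∀ q, ident q ∈ x → q ∈ S x := by
    intro x hx q hq
    rw [hS]
    exact ⟨0, by rw [hlab]; exact ⟨hx, hq⟩⟩
  intro p hp
  obtain ⟨τ, hτ⟩ := sLiveness p hp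
  refine ⟨τ, fun τ' hτ' => ⟨trusted p τ', (trusted p τ').val, ?_, ?_⟩⟩
  · rw [hquo]
    exact ⟨τ', le_rfl, rfl⟩
  · refine val_le_idsOf_of_forall_mem fun i hi => ?_
    obtain ⟨q, hqC, rfl⟩ := hτ τ' hτ' i hi
    exact ⟨q, ⟨mem_S _ (htr p τ') q hi, hqC⟩, rfl⟩

/-- In a system with unique identifiers, if `trusted` satisfies
the Σ Liveness property and `trusted_p^τ ⊆ I(Π)`, then the derived pair
`(h_quora, h_labels)` satisfies the HΣ Liveness property. -/
theorem sigma_to_hs_liveness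
    {Proc Ident : Type*} [Fintype Proc] [Nonempty Proc] [DecidableEq Ident]
    (ident : Proc → Ident) (hinj : Function.Injective ident)
    (Correct : Set Proc) (hC : Correct.Nonempty)
    (trusted : Proc → ℕ → Finset Ident)
    (htr : ∀ p τ, trusted p τ ⊆ Finset.univ.image ident)
    -- Σ Liveness: eventually trusted_p ⊆ I(Correct)
    (sLiveness : ∀ p ∈ Correct, ∃ τ, ∀ τ', τ ≤ τ' →
      ∀ i ∈ trusted p τ', ∃ q ∈ Correct, ident q = i)
    (h_labels : Proc → ℕ → Set (Finset Ident))
    (hlab : ∀ p τ, h_labels p τ =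
      {s | s ⊆ Finset.univ.image ident ∧ ident p ∈ s})
    (h_quora : Proc → ℕ → Set (Finset Ident × Multiset Ident))
    (hquo : ∀ p τ, h_quora p τ =
      {q | ∃ τ' ≤ τ, q = (trusted p τ', (trusted p τ').val)})
    (S : Finset Ident → Set Proc)
    (hS : ∀ x, S x = {p | ∃ τ, x ∈ h_labels p τ}) :
    -- HΣ Liveness
    ∀ p ∈ Correct, ∃ τ, ∀ τ', τ ≤ τ' → ∃ x m, (x, m) ∈ h_quora p τ' ∧
      m ≤ idsOf ident (S x ∩ Correct) :=
  sigma_to_hs_liveness_general ident Correct trusted htr sLiveness h_labels hlab h_quora hquo S hS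
end

section
/- Let Π be a homonymous system with failure pattern Correct, where Ident is linearly ordered, and let h_trusted be a ◇HP̄-history. Fix a default identifier d and define h_leader_p^τ as the minimum element of the multiset h_trusted_p^τ if it is nonempty and d otherwise, and h_multiplicity_p^τ as the multiplicity of h_leader_p^τ in h_trusted_p^τ. Then (h_leader, h_multiplicity) satisfies the HΩ Election property, with eventual common leader identifier ℓ = min I(Correct) and eventual common multiplicity mult_{I(Correct)}(ℓ). (A failure detector of class HΩ can be obtained from any detector of class ◇HP̄ without any communication.) -/
theorem Multiset.untopD_min_toFinset_mem {α : Type*} [LinearOrder α] [DecidableEq α] (d : α)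
    {m : Multiset α} (hm : m ≠ 0) : WithTop.untopD d m.toFinset.min ∈ m := by
  have hne : m.toFinset.Nonempty := Multiset.toFinset_nonempty.2 hm
  rw [← Finset.coe_min' hne, WithTop.untopD_coe]
  exact Multiset.mem_toFinset.1 (Finset.min'_mem _ hne)

section idsOf

variable {Proc Ident : Type*} [Fintype Proc] (ident : Proc → Ident) {S : Set Proc}

theorem mem_idsOf_of_mem {p : Proc} (hp : p ∈ S) : ident p ∈ idsOf ident S :=
  Multiset.mem_map_of_mem ident (by simpa using hp)

theorem idsOf_ne_zero (hS : S.Nonempty) : idsOf ident S ≠ 0 :=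
  fun h => Multiset.notMem_zero _ (h ▸ mem_idsOf_of_mem ident hS.some_mem)

end idsOf

theorem hp_to_homega_general
    {Proc Ident : Type*} [Fintype Proc]
    [LinearOrder Ident] [DecidableEq Ident]
    (ident : Proc → Ident)
    (Correct : Set Proc) (hC : Correct.Nonempty)
    (h_trusted : Proc → ℕ → Multiset Ident)
    -- ◇HP̄ Liveness
    (hpLiveness : ∀ p ∈ Correct, ∃ τ, ∀ τ', τ ≤ τ' →
      h_trusted p τ' = idsOf ident Correct)
    (d : Ident)
    (h_leader : Proc → ℕ → Ident)
    (hld : ∀ p τ, h_leader p τ = WithTop.untopD d ((h_trusted p τ).toFinset.min))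
    (h_multiplicity : Proc → ℕ → ℕ)
    (hmu : ∀ p τ, h_multiplicity p τ = (h_trusted p τ).count (h_leader p τ))
    (ℓ : Ident)
    (hℓ : ℓ = WithTop.untopD d ((idsOf ident Correct).toFinset.min)) :
    -- HΩ Election, with leader ℓ = min I(Correct)
    ℓ ∈ idsOf ident Correct ∧
    ∃ τ, ∀ τ', τ ≤ τ' → ∀ p ∈ Correct,
      h_leader p τ' = ℓ ∧
      h_multiplicity p τ' = (idsOf ident Correct).count ℓ := by
  refine ⟨hℓ ▸ Multiset.untopD_min_toFinset_mem d (idsOf_ne_zero ident hC), ?_⟩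
  have hstable : ∀ᶠ τ in Filter.atTop, ∀ p ∈ Correct, h_trusted p τ = idsOf ident Correct :=
    (Filter.eventually_all_finite (Set.toFinite Correct)).2
      fun p hp => Filter.eventually_atTop.2 (hpLiveness p hp)
  obtain ⟨τ, hτ⟩ := Filter.eventually_atTop.1 hstable
  refine ⟨τ, fun τ' hτ' p hp => ?_⟩
  have htrusted := hτ τ' hτ' p hp
  have hleader : h_leader p τ' = ℓ := by rw [hld, htrusted, hℓ]
  exact ⟨hleader, by rw [hmu, htrusted, hleader]⟩

/-- In a homonymous system with linearly ordered identifiers,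
given a ◇HP̄-history `h_trusted`, defining `h_leader_p^τ` as the minimum of
the multiset `h_trusted_p^τ` (and the default identifier `d` if that multiset
is empty), and `h_multiplicity_p^τ` as the multiplicity of `h_leader_p^τ` in
`h_trusted_p^τ`, the pair `(h_leader, h_multiplicity)` satisfies the HΩ
Election property, with eventual common leader `ℓ = min I(Correct)` and
eventual common multiplicity `mult_{I(Correct)}(ℓ)`. -/
theorem hp_to_homega
    {Proc Ident : Type*} [Fintype Proc] [Nonempty Proc]
    [LinearOrder Ident] [DecidableEq Ident]
    (ident : Proc → Ident)
    (Correct : Set Proc) (hC : Correct.Nonempty)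
    (h_trusted : Proc → ℕ → Multiset Ident)
    -- ◇HP̄ Liveness
    (hpLiveness : ∀ p ∈ Correct, ∃ τ, ∀ τ', τ ≤ τ' →
      h_trusted p τ' = idsOf ident Correct)
    (d : Ident)
    (h_leader : Proc → ℕ → Ident)
    (hld : ∀ p τ, h_leader p τ = WithTop.untopD d ((h_trusted p τ).toFinset.min))
    (h_multiplicity : Proc → ℕ → ℕ)
    (hmu : ∀ p τ, h_multiplicity p τ = (h_trusted p τ).count (h_leader p τ))
    (ℓ : Ident)
    (hℓ : ℓ = WithTop.untopD d ((idsOf ident Correct).toFinset.min)) :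
    -- HΩ Election, with leader ℓ = min I(Correct)
    ℓ ∈ idsOf ident Correct ∧
    ∃ τ, ∀ τ', τ ≤ τ' → ∀ p ∈ Correct,
      h_leader p τ' = ℓ ∧
      h_multiplicity p τ' = (idsOf ident Correct).count ℓ :=
  hp_to_homega_general ident Correct hC h_trusted hpLiveness d h_leader hld h_multiplicity hmu ℓ hℓ
end
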